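/- Let −∞ ≤ a < b ≤ ∞ and let I be one of the intervals (a,b), (a,b], [a,b), [a,b]. Let λ, μ : I → ℂ be continuous and let A(t) be the upper-triangular matrix with diagonal entries λ(t), λ(t) and upper-right entry μ(t). Suppose that κ₂₁(t) := ∫_t^b (1 + |∫_t^s μ(τ) dτ|) e^{−∫_t^s Re λ(τ) dτ} ds exists (as a finite, possibly improper, integral) for all t ∈ I, and that K₂₁ := sup_{t∈I} κ₂₁(t) < ∞. Then the system x' = A(t)x is Ulam stable on I with Ulam constant K₂₁ (with respect to the maximum norm on ℂ²). Furthermore, if in addition lim_{t→b⁻} ∫_{t₀}^t Re λ(s) ds = ∞ for t₀ ∈ (a,b), then for every ε > 0 and every continuously differentiable φ : I → ℂ² with sup_{t∈I} ‖φ'(t) − A(t)φ(t)‖∞ ≤ ε, there exists a unique solution x of x' = A(t)x satisfying sup_{t∈I} ‖φ(t) − x(t)‖∞ ≤ K₂₁ε. -/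

import Mathlib

open MeasureTheory Filter Set

noncomputable section

/-- Ulam stability on `I` with constant `K` for the system `x' = A(t) x` on `ℂ²`,
with respect to the maximum norm (the sup norm on `Fin 2 → ℂ`). -/
def UlamStable2C (I : Set ℝ) (A : ℝ → Matrix (Fin 2) (Fin 2) ℂ) (K : ℝ) : Prop :=
  0 < K ∧
  ∀ ε : ℝ, 0 < ε →
    ∀ φ φd : ℝ → Fin 2 → ℂ,
      (∀ t ∈ I, HasDerivWithinAt φ (φd t) I t) →
      ContinuousOn φd I →
      (∀ t ∈ I, ‖φd t - (A t).mulVec (φ t)‖ ≤ ε) →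
      ∃ x : ℝ → Fin 2 → ℂ,
        (∀ t ∈ I, HasDerivWithinAt x ((A t).mulVec (x t)) I t) ∧
        ∀ t ∈ I, ‖φ t - x t‖ ≤ K * ε

/-- `κ₂₁(t) = ∫_t^b (1 + |∫_t^s μ|) exp(-∫_t^s Re λ) ds`. -/
def kappa21 (b : EReal) (l m : ℝ → ℂ) (t : ℝ) : ℝ :=
  ∫ s in {s : ℝ | t < s ∧ (s : EReal) < b},
    (1 + ‖∫ τ in t..s, m τ‖) * Real.exp (-∫ τ in t..s, (l τ).re)

/-!
Variation of constants. With `L' = λ`, `M' = μ` and the transition matrix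
`Φ(t, s) = exp (L t - L s) • !![1, M t - M s; 0, 1]`, an approximate solution `φ` with defect
`f = φ' - A φ`, `‖f‖ ≤ ε`, is corrected to the exact solution `x t = φ t + ∫_t^b Φ(t, s) f(s) ds`.
Since `‖Φ(t, s) v‖ ≤ (1 + |∫_t^s μ|) exp (-∫_t^s Re λ) ‖v‖`, the correction has norm at most
`κ₂₁(t) ε`.

For uniqueness, the difference of two such solutions is a bounded solution `z`. Its second
component solves `z' = λ z`, hence so does its first, and a bounded solution of `z' = λ z` vanishes
because `|z t₀| = exp (-∫_{t₀}^t Re λ) |z t| → 0` as `t → b`.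
-/

open Topology Matrix

theorem MeasureTheory.Integrable.matrix_mulVec {α n 𝕜 : Type*} [MeasurableSpace α]
    {μ : Measure α} [Fintype n] [RCLike 𝕜] {g : α → n → 𝕜} (hg : Integrable g μ)
    (B : Matrix n n 𝕜) :
    Integrable (fun a => B *ᵥ g a) μ :=
  (LinearMap.toContinuousLinearMap (Matrix.mulVecLin B)).integrable_comp hg

theorem MeasureTheory.Integrable.integral_matrix_mulVec {α n 𝕜 : Type*} [MeasurableSpace α]
    {μ : Measure α} [Fintype n] [RCLike 𝕜] {g : α → n → 𝕜} (hg : Integrable g μ)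
    {B : Matrix n n 𝕜} :
    ∫ a, B *ᵥ g a ∂μ = B *ᵥ ∫ a, g a ∂μ :=
  (LinearMap.toContinuousLinearMap (Matrix.mulVecLin B)).integral_comp_comm hg

theorem Set.OrdConnected.hasDerivWithinAt_integral {E : Type*} [NormedAddCommGroup E]
    [NormedSpace ℝ E] [CompleteSpace E] {I : Set ℝ} (hI : I.OrdConnected) {f : ℝ → E}
    (hf : ContinuousOn f I) {a t : ℝ} (ha : a ∈ I) (ht : t ∈ I) :
    HasDerivWithinAt (fun u => ∫ x in a..u, f x) (f t) I t := by
  have hmeas : MeasurableSet I := hI.measurableSet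
  have : IsMeasurablyGenerated (𝓝[I] t) := hmeas.nhdsWithin_isMeasurablyGenerated t
  have : intervalIntegral.FTCFilter t (𝓝[I] t) (𝓝[I] t) :=
    { toTendstoIxxClass := tendstoIxxClass_of_subset fun _ _ => Ioc_subset_Icc_self
      pure_le := pure_le_nhdsWithin ht
      le_nhds := inf_le_left }
  exact intervalIntegral.integral_hasDerivWithinAt_right
    ((hf.mono (hI.uIcc_subset ha ht)).intervalIntegrable)
    (hf.stronglyMeasurableAtFilter_nhdsWithin hmeas t) (hf t ht)

def tailSet (b : EReal) (t : ℝ) : Set ℝ := {s | t < s ∧ (s : EReal) < b}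

theorem isOpen_tailSet (b : EReal) (t : ℝ) : IsOpen (tailSet b t) :=
  isOpen_Ioi.inter (isOpen_Iio.preimage continuous_coe_real_ereal)

theorem measurableSet_tailSet (b : EReal) (t : ℝ) : MeasurableSet (tailSet b t) :=
  (isOpen_tailSet b t).measurableSet

theorem tailSet_eq_Ioc_union {b : EReal} {t t' : ℝ} (htt' : t ≤ t') (hb : (t' : EReal) < b) :
    tailSet b t = Ioc t t' ∪ tailSet b t' := by
  ext s
  simp only [tailSet, mem_ofPred_eq, mem_union, mem_Ioc]
  constructor
  · rintro ⟨hts, hsb⟩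
    exact (le_or_gt s t').imp (fun h => ⟨hts, h⟩) (fun h => ⟨h, hsb⟩)
  · rintro (⟨hts, hst'⟩ | ⟨ht's, hsb⟩)
    · exact ⟨hts, (EReal.coe_le_coe_iff.2 hst').trans_lt hb⟩
    · exact ⟨htt'.trans_lt ht's, hsb⟩

theorem setIntegral_tailSet_eq_add {E : Type*} [NormedAddCommGroup E] [NormedSpace ℝ E]
    {b : EReal} {t t' : ℝ} {g : ℝ → E} (htt' : t ≤ t') (hb : (t' : EReal) ≤ b)
    (hg : IntegrableOn g (Ioc t t')) (hg' : IntegrableOn g (tailSet b t')) :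
    ∫ s in tailSet b t, g s = (∫ s in t..t', g s) + ∫ s in tailSet b t', g s := by
  rw [intervalIntegral.integral_of_le htt']
  rcases hb.lt_or_eq with hb | rfl
  · rw [tailSet_eq_Ioc_union htt' hb, setIntegral_union _ (measurableSet_tailSet _ _) hg hg']
    exact disjoint_left.2 fun s hs hs' => hs'.1.not_ge hs.2
  · have h₁ : tailSet t' t = Ioo t t' := by ext s; simp [tailSet]
    have h₂ : tailSet t' t' = ∅ :=
      eq_empty_of_forall_notMem fun s hs => hs.1.not_gt (EReal.coe_lt_coe_iff.1 hs.2)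
    rw [h₁, h₂, setIntegral_empty, add_zero, integral_Ioc_eq_integral_Ioo]

theorem Set.OrdConnected.hasDerivWithinAt_setIntegral_tailSet {E : Type*} [NormedAddCommGroup E]
    [NormedSpace ℝ E] [CompleteSpace E] {I : Set ℝ} (hI : I.OrdConnected) {b : EReal}
    (hIb : ∀ x ∈ I, (x : EReal) ≤ b) {g : ℝ → E} (hg : ContinuousOn g I)
    (hint : ∀ t ∈ I, IntegrableOn g (tailSet b t)) {t : ℝ} (ht : t ∈ I) :
    HasDerivWithinAt (fun u => ∫ s in tailSet b u, g s) (-g t) I t := by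
  have hIoc : ∀ u ∈ I, ∀ v ∈ I, IntegrableOn g (Ioc u v) := fun u hu v hv =>
    ((hg.mono (hI.out hu hv)).integrableOn_Icc).mono_set Ioc_subset_Icc_self
  have key : ∀ u ∈ I, ∫ s in tailSet b u, g s = (∫ s in tailSet b t, g s) - ∫ s in t..u, g s := by
    intro u hu
    rcases le_total t u with h | h
    · rw [setIntegral_tailSet_eq_add h (hIb u hu) (hIoc t ht u hu) (hint u hu)]
      abel
    · rw [setIntegral_tailSet_eq_add h (hIb t ht) (hIoc u hu t ht) (hint t ht),
        intervalIntegral.integral_symm]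
      abel
  exact ((hI.hasDerivWithinAt_integral hg ht ht).const_sub _).congr key (key t ht)

theorem upperTriangular_mulVec (p q : ℂ) (v : Fin 2 → ℂ) :
    !![p, q; 0, p] *ᵥ v = ![p * v 0 + q * v 1, p * v 1] := by
  ext i; fin_cases i <;> simp [vecHead, vecTail]

/-- `X(t) X(s)⁻¹` for the fundamental matrix `X(t) = exp (L t) • !![1, M t; 0, 1]` of
`x' = !![L', M'; 0, L'] x`. -/
def transition (L M : ℝ → ℂ) (t s : ℝ) : Matrix (Fin 2) (Fin 2) ℂ :=
  Complex.exp (L t - L s) • !![1, M t - M s; 0, 1]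

section Transition

variable {L M : ℝ → ℂ}

theorem transition_mulVec (t s : ℝ) (v : Fin 2 → ℂ) :
    transition L M t s *ᵥ v = Complex.exp (L t - L s) • ![v 0 + (M t - M s) * v 1, v 1] := by
  rw [transition, smul_mulVec, upperTriangular_mulVec, one_mul, one_mul]

theorem transition_self (t : ℝ) : transition L M t t = 1 := by
  ext i j; fin_cases i <;> fin_cases j <;> simp [transition]

theorem transition_mul_transition (t r s : ℝ) :
    transition L M t r * transition L M r s = transition L M t s := by
  rw [transition, transition, transition, Matrix.smul_mul, Matrix.mul_smul, smul_smul,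
    ← Complex.exp_add, sub_add_sub_cancel]
  congr 1
  ext i j
  fin_cases i <;> fin_cases j <;> simp

theorem continuousOn_transition_mulVec {I : Set ℝ} {f : ℝ → Fin 2 → ℂ} (hL : ContinuousOn L I)
    (hM : ContinuousOn M I) (hf : ContinuousOn f I) (t : ℝ) :
    ContinuousOn (fun s => transition L M t s *ᵥ f s) I := by
  simp only [transition_mulVec]
  fun_prop

theorem hasDerivWithinAt_transition_mulVec {l m : ℝ → ℂ} {I : Set ℝ} {t s : ℝ}
    {v : ℝ → Fin 2 → ℂ} {v' : Fin 2 → ℂ}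
    (hL : HasDerivWithinAt L (l t) I t) (hM : HasDerivWithinAt M (m t) I t)
    (hv : HasDerivWithinAt v v' I t) :
    HasDerivWithinAt (fun u => transition L M u s *ᵥ v u)
      (!![l t, m t; 0, l t] *ᵥ (transition L M t s *ᵥ v t) + transition L M t s *ᵥ v') I t := by
  have hE := (hL.sub_const (L s)).cexp
  have hv0 := hasDerivWithinAt_pi.1 hv 0
  have hv1 := hasDerivWithinAt_pi.1 hv 1
  simp only [transition_mulVec, upperTriangular_mulVec]
  refine hasDerivWithinAt_pi.2 (Fin.forall_fin_two.2 ⟨?_, ?_⟩) <;>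
    simp only [Pi.add_apply, Pi.smul_apply, smul_eq_mul, cons_val_zero, cons_val_one]
  · exact (hE.mul (hv0.add ((hM.sub_const (M s)).mul hv1))).congr_deriv
      (by simp only [Pi.add_apply, Pi.mul_apply]; ring)
  · exact (hE.mul hv1).congr_deriv (by ring)

def kappaKernel (L M : ℝ → ℂ) (t s : ℝ) : ℝ := (1 + ‖M t - M s‖) * Real.exp (L t - L s).re

theorem kappaKernel_nonneg (t s : ℝ) : 0 ≤ kappaKernel L M t s := by
  unfold kappaKernel; positivity

theorem norm_transition_mulVec_le (t s : ℝ) (v : Fin 2 → ℂ) :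
    ‖transition L M t s *ᵥ v‖ ≤ kappaKernel L M t s * ‖v‖ := by
  rw [transition_mulVec, norm_smul, Complex.norm_exp, kappaKernel, mul_comm (1 + _), mul_assoc]
  gcongr
  have hv0 := norm_le_pi_norm v 0
  have hv1 := norm_le_pi_norm v 1
  refine (pi_norm_le_iff_of_nonneg (by positivity)).2 (Fin.forall_fin_two.2 ⟨?_, ?_⟩)
  · calc ‖v 0 + (M t - M s) * v 1‖ ≤ ‖v 0‖ + ‖M t - M s‖ * ‖v 1‖ :=
          (norm_add_le _ _).trans_eq (by rw [norm_mul])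
      _ ≤ (1 + ‖M t - M s‖) * ‖v‖ := by nlinarith [norm_nonneg (M t - M s)]
  · simpa using hv1.trans (le_mul_of_one_le_left (norm_nonneg v) (by simp))

end Transition

section Existence

variable {I : Set ℝ} {b : EReal} {l m L M : ℝ → ℂ} {f : ℝ → Fin 2 → ℂ} {ε : ℝ}

theorem ae_norm_transition_mulVec_le (hfε : ∀ s ∈ I, ‖f s‖ ≤ ε) {t : ℝ}
    (htail : tailSet b t ⊆ I) :
    ∀ᵐ s ∂volume.restrict (tailSet b t), ‖transition L M t s *ᵥ f s‖ ≤ kappaKernel L M t s * ε := by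
  filter_upwards [ae_restrict_mem (measurableSet_tailSet b t)] with s hs
  exact (norm_transition_mulVec_le t s (f s)).trans
    (mul_le_mul_of_nonneg_left (hfε s (htail hs)) (kappaKernel_nonneg t s))

theorem integrableOn_transition_mulVec (hL : ContinuousOn L I) (hM : ContinuousOn M I)
    (hf : ContinuousOn f I) (hfε : ∀ s ∈ I, ‖f s‖ ≤ ε) {t : ℝ} (htail : tailSet b t ⊆ I)
    (hk : IntegrableOn (kappaKernel L M t) (tailSet b t)) :
    IntegrableOn (fun s => transition L M t s *ᵥ f s) (tailSet b t) :=
  (hk.mul_const ε).mono' (((continuousOn_transition_mulVec hL hM hf t).mono htail)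
    |>.aestronglyMeasurable (measurableSet_tailSet b t)) (ae_norm_transition_mulVec_le hfε htail)

theorem norm_setIntegral_transition_mulVec_le (hfε : ∀ s ∈ I, ‖f s‖ ≤ ε) {t : ℝ}
    (htail : tailSet b t ⊆ I) (hk : IntegrableOn (kappaKernel L M t) (tailSet b t)) :
    ‖∫ s in tailSet b t, transition L M t s *ᵥ f s‖ ≤
      (∫ s in tailSet b t, kappaKernel L M t s) * ε := by
  rw [← integral_mul_const]
  exact norm_integral_le_of_norm_le (hk.mul_const ε) (ae_norm_transition_mulVec_le hfε htail)

theorem hasDerivWithinAt_setIntegral_transition_mulVec (hI : I.OrdConnected)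
    (hIb : ∀ x ∈ I, (x : EReal) ≤ b) (hL : ∀ t ∈ I, HasDerivWithinAt L (l t) I t)
    (hM : ∀ t ∈ I, HasDerivWithinAt M (m t) I t) (hf : ContinuousOn f I)
    (hint : ∀ t ∈ I, IntegrableOn (fun s => transition L M t s *ᵥ f s) (tailSet b t))
    {t₀ : ℝ} (ht₀ : t₀ ∈ I) :
    HasDerivWithinAt (fun t => ∫ s in tailSet b t, transition L M t s *ᵥ f s)
      (!![l t₀, m t₀; 0, l t₀] *ᵥ (∫ s in tailSet b t₀, transition L M t₀ s *ᵥ f s) - f t₀)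
      I t₀ := by
  have hLc : ContinuousOn L I := fun t ht => (hL t ht).continuousWithinAt
  have hMc : ContinuousOn M I := fun t ht => (hM t ht).continuousWithinAt
  have hint₀ : ∀ t ∈ I, IntegrableOn (fun s => transition L M t₀ s *ᵥ f s) (tailSet b t) := by
    intro t ht
    simpa only [IntegrableOn, mulVec_mulVec, transition_mul_transition] using
      (hint t ht).matrix_mulVec (transition L M t₀ t)
  have hfactor : ∀ t ∈ I, ∫ s in tailSet b t, transition L M t s *ᵥ f s
      = transition L M t t₀ *ᵥ ∫ s in tailSet b t, transition L M t₀ s *ᵥ f s := by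
    intro t ht
    rw [← (hint₀ t ht).integral_matrix_mulVec]
    simp only [mulVec_mulVec, transition_mul_transition]
  have hC := hI.hasDerivWithinAt_setIntegral_tailSet hIb
    (continuousOn_transition_mulVec hLc hMc hf t₀) hint₀ ht₀
  refine ((hasDerivWithinAt_transition_mulVec (hL t₀ ht₀) (hM t₀ ht₀) hC).congr hfactor
    (hfactor t₀ ht₀)).congr_deriv ?_
  rw [← hfactor t₀ ht₀, transition_self, one_mulVec, one_mulVec, sub_eq_add_neg]

theorem exists_hasDerivWithinAt_norm_sub_le (hI : I.OrdConnected)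
    (hIb : ∀ x ∈ I, (x : EReal) ≤ b) (htail : ∀ t ∈ I, tailSet b t ⊆ I)
    (hL : ∀ t ∈ I, HasDerivWithinAt L (l t) I t) (hM : ∀ t ∈ I, HasDerivWithinAt M (m t) I t)
    {φ : ℝ → Fin 2 → ℂ} (hφ : ∀ t ∈ I, HasDerivWithinAt φ (!![l t, m t; 0, l t] *ᵥ φ t + f t) I t)
    (hf : ContinuousOn f I) (hε : 0 ≤ ε) (hfε : ∀ t ∈ I, ‖f t‖ ≤ ε)
    (hk : ∀ t ∈ I, IntegrableOn (kappaKernel L M t) (tailSet b t)) {K : ℝ}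
    (hK : ∀ t ∈ I, ∫ s in tailSet b t, kappaKernel L M t s ≤ K) :
    ∃ x : ℝ → Fin 2 → ℂ, (∀ t ∈ I, HasDerivWithinAt x (!![l t, m t; 0, l t] *ᵥ x t) I t) ∧
      ∀ t ∈ I, ‖φ t - x t‖ ≤ K * ε := by
  have hLc : ContinuousOn L I := fun t ht => (hL t ht).continuousWithinAt
  have hMc : ContinuousOn M I := fun t ht => (hM t ht).continuousWithinAt
  have hint : ∀ t ∈ I, IntegrableOn (fun s => transition L M t s *ᵥ f s) (tailSet b t) :=
    fun t ht => integrableOn_transition_mulVec hLc hMc hf hfε (htail t ht) (hk t ht)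
  refine ⟨fun t => φ t + ∫ s in tailSet b t, transition L M t s *ᵥ f s, fun t ht => ?_,
    fun t ht => ?_⟩
  · refine ((hφ t ht).add
      (hasDerivWithinAt_setIntegral_transition_mulVec hI hIb hL hM hf hint ht)).congr_deriv ?_
    rw [mulVec_add]
    abel
  · rw [sub_add_cancel_left, norm_neg]
    exact (norm_setIntegral_transition_mulVec_le hfε (htail t ht) (hk t ht)).trans
      (mul_le_mul_of_nonneg_right (hK t ht) hε)

end Existence

section Uniqueness

variable {I : Set ℝ} {l m : ℝ → ℂ} {t₀ : ℝ}

theorem Set.OrdConnected.eq_exp_integral_mul (hI : I.OrdConnected) (hl : ContinuousOn l I)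
    {ζ : ℝ → ℂ} (hζ : ∀ t ∈ I, HasDerivWithinAt ζ (l t * ζ t) I t) (ht₀ : t₀ ∈ I) {t : ℝ}
    (ht : t ∈ I) : ζ t = Complex.exp (∫ s in t₀..t, l s) * ζ t₀ := by
  set Λ : ℝ → ℂ := fun u => ∫ s in t₀..u, l s
  have hw : ∀ u ∈ I, HasDerivWithinAt (fun u => Complex.exp (-Λ u) * ζ u) 0 I u := fun u hu =>
    ((hI.hasDerivWithinAt_integral hl ht₀ hu).neg.cexp.mul (hζ u hu)).congr_deriv (by ring)
  have hconst : Complex.exp (-Λ t) * ζ t = ζ t₀ := by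
    have := hI.convex.norm_image_sub_le_of_norm_hasDerivWithin_le (C := 0) hw (by simp) ht₀ ht
    simpa [Λ, sub_eq_zero] using this
  rw [← hconst, ← mul_assoc, ← Complex.exp_add, add_neg_cancel, Complex.exp_zero, one_mul]

theorem Set.OrdConnected.eqOn_zero_of_tendsto (hI : I.OrdConnected) (hl : ContinuousOn l I)
    {F : Filter ℝ} [F.NeBot] (hFI : ∀ᶠ t in F, t ∈ I) (ht₀ : t₀ ∈ I)
    (htend : Tendsto (fun t => ∫ s in t₀..t, (l s).re) F atTop)
    {ζ : ℝ → ℂ} (hζ : ∀ t ∈ I, HasDerivWithinAt ζ (l t * ζ t) I t) {C : ℝ}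
    (hC : ∀ t ∈ I, ‖ζ t‖ ≤ C) : EqOn ζ 0 I := by
  have hnorm : ∀ t ∈ I, ‖ζ t‖ = Real.exp (∫ s in t₀..t, (l s).re) * ‖ζ t₀‖ := by
    intro t ht
    rw [hI.eq_exp_integral_mul hl hζ ht₀ ht, norm_mul, Complex.norm_exp,
      ← Complex.reCLM_apply, ← Complex.reCLM.intervalIntegral_comp_comm
        ((hl.mono (hI.uIcc_subset ht₀ ht)).intervalIntegrable)]
    rfl
  have hζ₀ : ζ t₀ = 0 := by
    refine norm_le_zero_iff.1 (ge_of_tendsto (by simpa using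
      (Real.tendsto_exp_neg_atTop_nhds_zero.comp htend).const_mul C) ?_)
    filter_upwards [hFI] with t ht
    calc ‖ζ t₀‖ = Real.exp (-∫ s in t₀..t, (l s).re) * ‖ζ t‖ := by
          rw [hnorm t ht, ← mul_assoc, ← Real.exp_add, neg_add_cancel, Real.exp_zero, one_mul]
      _ ≤ C * Real.exp (-∫ s in t₀..t, (l s).re) := by
          rw [mul_comm]; exact mul_le_mul_of_nonneg_right (hC t ht) (Real.exp_pos _).le
  intro t ht
  rw [hI.eq_exp_integral_mul hl hζ ht₀ ht, hζ₀, mul_zero, Pi.zero_apply]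

theorem Set.OrdConnected.eqOn_zero_of_upperTriangular (hI : I.OrdConnected)
    (hl : ContinuousOn l I) {F : Filter ℝ} [F.NeBot] (hFI : ∀ᶠ t in F, t ∈ I) (ht₀ : t₀ ∈ I)
    (htend : Tendsto (fun t => ∫ s in t₀..t, (l s).re) F atTop) {z : ℝ → Fin 2 → ℂ}
    (hz : ∀ t ∈ I, HasDerivWithinAt z (!![l t, m t; 0, l t] *ᵥ z t) I t) {C : ℝ}
    (hC : ∀ t ∈ I, ‖z t‖ ≤ C) : EqOn z 0 I := by
  have hzi : ∀ i, ∀ t ∈ I, ‖z t i‖ ≤ C := fun i t ht => (norm_le_pi_norm (z t) i).trans (hC t ht)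
  have hz₁ : EqOn (fun t => z t 1) 0 I := by
    refine hI.eqOn_zero_of_tendsto hl hFI ht₀ htend (fun t ht => ?_) (hzi 1)
    simpa only [upperTriangular_mulVec, cons_val_one, cons_val_zero, head_cons] using
      hasDerivWithinAt_pi.1 (hz t ht) 1
  have hz₀ : EqOn (fun t => z t 0) 0 I := by
    refine hI.eqOn_zero_of_tendsto hl hFI ht₀ htend (fun t ht => ?_) (hzi 0)
    simpa only [upperTriangular_mulVec, cons_val_zero, cons_val_one, head_cons, hz₁ ht,
      Pi.zero_apply, mul_zero, add_zero] using hasDerivWithinAt_pi.1 (hz t ht) 0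
  intro t ht
  ext i
  fin_cases i
  exacts [hz₀ ht, hz₁ ht]

end Uniqueness

section Interval

variable {a b : EReal} {I : Set ℝ}

theorem ordConnected_of_ereal_Ioo_subset_of_subset_Icc
    (hI1 : ∀ x : ℝ, a < (x : EReal) → (x : EReal) < b → x ∈ I)
    (hI2 : ∀ x ∈ I, a ≤ (x : EReal) ∧ (x : EReal) ≤ b) : I.OrdConnected := by
  refine ⟨fun x hx y hy z hz => ?_⟩
  rcases hz.1.eq_or_lt with rfl | hxz
  · exact hx
  rcases hz.2.eq_or_lt with rfl | hzy
  · exact hy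
  exact hI1 z ((hI2 x hx).1.trans_lt (EReal.coe_lt_coe_iff.2 hxz))
    ((EReal.coe_lt_coe_iff.2 hzy).trans_le (hI2 y hy).2)

theorem tailSet_subset (hI1 : ∀ x : ℝ, a < (x : EReal) → (x : EReal) < b → x ∈ I)
    (hI2 : ∀ x ∈ I, a ≤ (x : EReal) ∧ (x : EReal) ≤ b) {t : ℝ} (ht : t ∈ I) :
    tailSet b t ⊆ I :=
  fun s hs => hI1 s ((hI2 t ht).1.trans_lt (EReal.coe_lt_coe_iff.2 hs.1)) hs.2

theorem neBot_comap_coe_nhdsLT (hab : a < b) : (comap ((↑) : ℝ → EReal) (𝓝[<] b)).NeBot := by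
  refine comap_neBot_iff.2 fun U hU => ?_
  obtain ⟨c, hcb, hc⟩ := (mem_nhdsLT_iff_exists_Ioo_subset' hab).1 hU
  obtain ⟨x, hcx, hxb⟩ := EReal.lt_iff_exists_real_btwn.1 hcb
  exact ⟨x, hc ⟨hcx, hxb⟩⟩

theorem eventually_comap_coe_nhdsLT_mem (hab : a < b)
    (hI1 : ∀ x : ℝ, a < (x : EReal) → (x : EReal) < b → x ∈ I) :
    ∀ᶠ t in comap ((↑) : ℝ → EReal) (𝓝[<] b), t ∈ I := by
  filter_upwards [preimage_mem_comap (Ioo_mem_nhdsLT hab)] with t ht using hI1 t ht.1 ht.2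

end Interval

theorem kappa21_pos {b : EReal} {l m : ℝ → ℂ} {t : ℝ} (ht : (t : EReal) < b)
    (hint : IntegrableOn
      (fun s => (1 + ‖∫ τ in t..s, m τ‖) * Real.exp (-∫ τ in t..s, (l τ).re)) (tailSet b t)) :
    0 < kappa21 b l m t := by
  change 0 < ∫ s in tailSet b t, _
  rw [setIntegral_pos_iff_support_of_nonneg_ae (ae_of_all _ fun s => by positivity) hint]
  have hsupp : Function.support
      (fun s => (1 + ‖∫ τ in t..s, m τ‖) * Real.exp (-∫ τ in t..s, (l τ).re)) = univ :=
    eq_univ_of_forall fun s => (mul_pos (by positivity) (Real.exp_pos _)).ne'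
  rw [hsupp, univ_inter]
  obtain ⟨r, htr, hrb⟩ := EReal.lt_iff_exists_real_btwn.1 ht
  exact (isOpen_tailSet b t).measure_pos volume ⟨r, EReal.coe_lt_coe_iff.1 htr, hrb⟩

theorem Set.OrdConnected.kappaKernel_integral_eq {I : Set ℝ} (hI : I.OrdConnected) {l m : ℝ → ℂ}
    (hl : ContinuousOn l I) (hm : ContinuousOn m I) {t₀ t s : ℝ} (ht₀ : t₀ ∈ I) (ht : t ∈ I)
    (hs : s ∈ I) :
    kappaKernel (fun u => ∫ τ in t₀..u, l τ) (fun u => ∫ τ in t₀..u, m τ) t s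
      = (1 + ‖∫ τ in t..s, m τ‖) * Real.exp (-∫ τ in t..s, (l τ).re) := by
  have hii : ∀ {f : ℝ → ℂ}, ContinuousOn f I → ∀ {u v}, u ∈ I → v ∈ I →
      IntervalIntegrable f volume u v := fun hf _ _ hu hv =>
    (hf.mono (hI.uIcc_subset hu hv)).intervalIntegrable
  rw [kappaKernel, norm_sub_rev, intervalIntegral.integral_interval_sub_left (hii hm ht₀ hs)
    (hii hm ht₀ ht), ← neg_sub, intervalIntegral.integral_interval_sub_left (hii hl ht₀ hs)
    (hii hl ht₀ ht), Complex.neg_re, ← Complex.reCLM_apply,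
    ← Complex.reCLM.intervalIntegral_comp_comm (hii hl ht hs)]
  rfl

theorem exists_hasDerivWithinAt_norm_sub_le_kappa21 {a b : EReal} (hab : a < b) {I : Set ℝ}
    (hI1 : ∀ x : ℝ, a < (x : EReal) → (x : EReal) < b → x ∈ I)
    (hI2 : ∀ x ∈ I, a ≤ (x : EReal) ∧ (x : EReal) ≤ b)
    {l m : ℝ → ℂ} (hl : ContinuousOn l I) (hm : ContinuousOn m I)
    (hker : ∀ t ∈ I, IntegrableOn
      (fun s => (1 + ‖∫ τ in t..s, m τ‖) * Real.exp (-∫ τ in t..s, (l τ).re)) (tailSet b t))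
    (hbdd : BddAbove (kappa21 b l m '' I)) {ε : ℝ} (hε : 0 ≤ ε) {φ φd : ℝ → Fin 2 → ℂ}
    (hφ : ∀ t ∈ I, HasDerivWithinAt φ (φd t) I t) (hφd : ContinuousOn φd I)
    (hφε : ∀ t ∈ I, ‖φd t - !![l t, m t; 0, l t] *ᵥ φ t‖ ≤ ε) :
    ∃ x : ℝ → Fin 2 → ℂ, (∀ t ∈ I, HasDerivWithinAt x (!![l t, m t; 0, l t] *ᵥ x t) I t) ∧
      ∀ t ∈ I, ‖φ t - x t‖ ≤ sSup (kappa21 b l m '' I) * ε := by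
  have hI := ordConnected_of_ereal_Ioo_subset_of_subset_Icc hI1 hI2
  obtain ⟨t₀, hat₀, ht₀b⟩ := EReal.lt_iff_exists_real_btwn.1 hab
  have ht₀ : t₀ ∈ I := hI1 t₀ hat₀ ht₀b
  have hkernel : ∀ t ∈ I, EqOn
      (kappaKernel (fun u => ∫ τ in t₀..u, l τ) (fun u => ∫ τ in t₀..u, m τ) t)
      (fun s => (1 + ‖∫ τ in t..s, m τ‖) * Real.exp (-∫ τ in t..s, (l τ).re)) (tailSet b t) :=
    fun t ht s hs => hI.kappaKernel_integral_eq hl hm ht₀ ht (tailSet_subset hI1 hI2 ht hs)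
  have hφc : ContinuousOn φ I := fun t ht => (hφ t ht).continuousWithinAt
  refine exists_hasDerivWithinAt_norm_sub_le hI (fun x hx => (hI2 x hx).2)
    (fun t ht => tailSet_subset hI1 hI2 ht) (fun t ht => hI.hasDerivWithinAt_integral hl ht₀ ht)
    (fun t ht => hI.hasDerivWithinAt_integral hm ht₀ ht)
    (fun t ht => (hφ t ht).congr_deriv (add_sub_cancel _ _).symm) ?_ hε hφε
    (fun t ht => (hker t ht).congr_fun (hkernel t ht).symm (measurableSet_tailSet b t))
    (fun t ht => (setIntegral_congr_fun (measurableSet_tailSet b t) (hkernel t ht)).trans_le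
      (le_csSup hbdd (mem_image_of_mem _ ht)))
  simp only [upperTriangular_mulVec]
  fun_prop

theorem statement10 (a b : EReal) (hab : a < b) (I : Set ℝ)
    (hI1 : ∀ x : ℝ, a < (x : EReal) → (x : EReal) < b → x ∈ I)
    (hI2 : ∀ x ∈ I, a ≤ (x : EReal) ∧ (x : EReal) ≤ b)
    (l m : ℝ → ℂ) (hl : ContinuousOn l I) (hm : ContinuousOn m I)
    (hker : ∀ t ∈ I, IntegrableOn
      (fun s => (1 + ‖∫ τ in t..s, m τ‖) * Real.exp (-∫ τ in t..s, (l τ).re))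
      {s : ℝ | t < s ∧ (s : EReal) < b})
    (hbdd : BddAbove (kappa21 b l m '' I)) :
    UlamStable2C I (fun t => !![l t, m t; 0, l t]) (sSup (kappa21 b l m '' I)) ∧
    ((∀ t₀ : ℝ, a < (t₀ : EReal) → (t₀ : EReal) < b →
        Tendsto (fun t => ∫ s in t₀..t, (l s).re)
          (Filter.comap (fun x : ℝ => (x : EReal)) (nhdsWithin b (Iio b))) atTop) →
      ∀ ε : ℝ, 0 < ε → ∀ φ φd : ℝ → Fin 2 → ℂ,
        (∀ t ∈ I, HasDerivWithinAt φ (φd t) I t) →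
        ContinuousOn φd I →
        (∀ t ∈ I, ‖φd t - (!![l t, m t; 0, l t]).mulVec (φ t)‖ ≤ ε) →
        ∃ x : ℝ → Fin 2 → ℂ,
          ((∀ t ∈ I, HasDerivWithinAt x ((!![l t, m t; 0, l t]).mulVec (x t)) I t) ∧
            ∀ t ∈ I, ‖φ t - x t‖ ≤ sSup (kappa21 b l m '' I) * ε) ∧
          ∀ y : ℝ → Fin 2 → ℂ,
            ((∀ t ∈ I, HasDerivWithinAt y ((!![l t, m t; 0, l t]).mulVec (y t)) I t) ∧
              ∀ t ∈ I, ‖φ t - y t‖ ≤ sSup (kappa21 b l m '' I) * ε) →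
            EqOn y x I) := by
  obtain ⟨t₀, hat₀, ht₀b⟩ := EReal.lt_iff_exists_real_btwn.1 hab
  have ht₀ : t₀ ∈ I := hI1 t₀ hat₀ ht₀b
  have hexists := fun ε (hε : 0 < ε) φ φd hφ hφd hφε =>
    exists_hasDerivWithinAt_norm_sub_le_kappa21 hab hI1 hI2 hl hm hker hbdd (φ := φ) (φd := φd)
      hε.le hφ hφd hφε
  refine ⟨⟨(kappa21_pos ht₀b (hker t₀ ht₀)).trans_le (le_csSup hbdd (mem_image_of_mem _ ht₀)),
    hexists⟩, fun htend ε hε φ φd hφ hφd hφε => ?_⟩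
  obtain ⟨x, hx, hxφ⟩ := hexists ε hε φ φd hφ hφd hφε
  refine ⟨x, ⟨hx, hxφ⟩, fun y ⟨hy, hyφ⟩ t ht => sub_eq_zero.1 ?_⟩
  have := neBot_comap_coe_nhdsLT hab
  refine (ordConnected_of_ereal_Ioo_subset_of_subset_Icc hI1 hI2).eqOn_zero_of_upperTriangular hl
    (eventually_comap_coe_nhdsLT_mem hab hI1) ht₀ (htend t₀ hat₀ ht₀b)
    (fun t ht => ((hy t ht).sub (hx t ht)).congr_deriv (mulVec_sub _ _ _).symm)
    (C := sSup (kappa21 b l m '' I) * ε * 2) (fun t ht => ?_) ht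
  calc ‖(y - x) t‖ = ‖(φ t - x t) - (φ t - y t)‖ := by rw [sub_sub_sub_cancel_left, Pi.sub_apply]
    _ ≤ _ := (norm_sub_le _ _).trans (by linarith [hxφ t ht, hyφ t ht])
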